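/- Suppose in round t the proposer i offers an outcome o ∈ L_t^i and the responder j rejects. Then there exists an outcome o' ∈ O_{t+1} with o' ∉ L_t^i such that L_{t+1}^j = (L_t^i \ {o}) ∪ {o'}. -/

import Mathlib

def respSize (m : ℕ) : ℕ := m / 2

def propSize (m : ℕ) : ℕ := if m % 2 = 1 then m / 2 else m / 2 - 1

def IsLowSet {α : Type*} (O : Finset α) (r : α → ℕ) (n : ℕ) (L : Finset α) : Prop :=
  L ⊆ O ∧ L.card = n ∧ ∀ a ∈ L, ∀ b ∈ O, b ∉ L → r a < r b

/-! Removing the offered outcome `o` from the proposer's lower set `Lᵢ` leaves a lower set of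
`O \ {o}` of size `|Lᵢ| - 1`, while the new responder's lower set `L'` is a lower set of the same
`O \ {o}` of size `|Lᵢ|`. Lower sets of one ranked set are nested by size, so `L'` is `Lᵢ \ {o}`
plus exactly one further outcome. -/

namespace IsLowSet

variable {α : Type*} {O L M : Finset α} {r : α → ℕ} {n m : ℕ}

theorem erase [DecidableEq α] (hL : IsLowSet O r n L) {a : α} (ha : a ∈ L) :
    IsLowSet (O.erase a) r (n - 1) (L.erase a) := by
  obtain ⟨hLO, hcard, hlow⟩ := hL
  refine ⟨Finset.erase_subset_erase a hLO, by rw [Finset.card_erase_of_mem ha, hcard], ?_⟩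
  intro x hx y hy hyL
  exact hlow x (Finset.mem_of_mem_erase hx) y (Finset.mem_of_mem_erase hy)
    fun hy' => hyL (Finset.mem_erase.mpr ⟨Finset.ne_of_mem_erase hy, hy'⟩)

theorem subset_of_le (hL : IsLowSet O r n L) (hM : IsLowSet O r m M) (hnm : n ≤ m) :
    L ⊆ M := by
  intro a haL
  by_contra haM
  -- `a` ranks above all of `M`, so everything in `M` ranks below `a ∈ L` and lies in `L`.
  have hML : M ⊆ L := fun b hbM => by
    by_contra hbL
    have := hL.2.2 a haL b (hM.1 hbM) hbL
    have := hM.2.2 b hbM a (hL.1 haL) haM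
    omega
  have := Finset.card_lt_card ⟨hML, fun h => haM (h haL)⟩
  rw [hL.2.1, hM.2.1] at this
  omega

end IsLowSet

theorem respSize_sub_one_eq_propSize (m : ℕ) : respSize (m - 1) = propSize m := by
  unfold respSize propSize
  split <;> omega

theorem lower_set_gains_outcome_of_offer_inside_prop_general {α : Type*} [DecidableEq α]
    (O : Finset α) (r : α → ℕ) (o : α)
    (Li L' : Finset α)
    (hLi : IsLowSet O r (propSize O.card) Li)
    (hoLi : o ∈ Li)
    (hL' : IsLowSet (O.erase o) r (respSize (O.card - 1)) L') :
    ∃ o' ∈ O.erase o, o' ∉ Li ∧ L' = (Li.erase o) ∪ {o'} := by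
  rw [respSize_sub_one_eq_propSize] at hL'
  have hErase := hLi.erase hoLi
  have hsub : Li.erase o ⊆ L' := hErase.subset_of_le hL' (Nat.sub_le _ _)
  have hcard : (Li.erase o).card + 1 = L'.card := by
    rw [hErase.2.1, hL'.2.1, ← hLi.2.1]
    have := Finset.card_pos.mpr ⟨o, hoLi⟩
    omega
  obtain ⟨o', ho'Erase, rfl⟩ := Finset.exists_eq_insert_iff.mpr ⟨hsub, hcard⟩
  have ho'O : o' ∈ O.erase o := hL'.1 (Finset.mem_insert_self o' _)
  refine ⟨o', ho'O, fun ho'Li => ho'Erase ?_, by rw [Finset.insert_eq, Finset.union_comm]⟩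
  exact Finset.mem_erase.mpr ⟨Finset.ne_of_mem_erase ho'O, ho'Li⟩

/-- if the proposer `i` offers `o ∈ L_t^i` and the responder rejects,
then the new responder's (agent `i`'s) lower set over `O \ {o}` equals
`(L_t^i \ {o}) ∪ {o'}` for some new outcome `o' ∈ O_{t+1}` with `o' ∉ L_t^i`. -/
theorem lower_set_gains_outcome_of_offer_inside_prop {α : Type*} [DecidableEq α]
    (O : Finset α) (r : α → ℕ) (hr : Set.InjOn r O) (o : α)
    (Li L' : Finset α)
    (hLi : IsLowSet O r (propSize O.card) Li)
    (hoLi : o ∈ Li)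
    (hL' : IsLowSet (O.erase o) r (respSize (O.card - 1)) L') :
    ∃ o' ∈ O.erase o, o' ∉ Li ∧ L' = (Li.erase o) ∪ {o'} :=
  lower_set_gains_outcome_of_offer_inside_prop_general O r o Li L' hLi hoLi hL'
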